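/- arXiv:1709.02334 — 2 statements merged into one kernel-verified Lean document; each statement's English description precedes it below -/
import Mathlib

section
/- A finite unordered rooted tree τ is self-nested if and only if its DAG reduction R(τ) is a linear DAG, i.e., R(τ) contains a directed path passing through all of its vertices. -/
/-- A finite rooted tree whose vertices form a finite subset `supp` of `ℕ`.
`par` maps each vertex to its parent; the root is a fixed point of `par`
(so it has no parent), and every vertex reaches the root by iterating `par`
(connectedness / acyclicity). -/
structure FTree where
  supp : Finset ℕ
  root : ℕ
  root_mem : root ∈ supp
  par : ℕ → ℕ
  par_mem : ∀ v ∈ supp, par v ∈ supp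
  par_root : par root = root
  reach : ∀ v ∈ supp, ∃ n, par^[n] v = root

namespace FTree

/-- Depth of a vertex: least number of parent steps needed to reach the root. -/
noncomputable def depth (t : FTree) (v : ℕ) : ℕ :=
  if h : v ∈ t.supp then Nat.find (t.reach v h) else 0

/-- `w` is a (weak) descendant of `v` in `t`. -/
def IsDesc (t : FTree) (v w : ℕ) : Prop :=
  w ∈ t.supp ∧ ∃ n ≤ t.depth w, t.par^[n] w = v

open Classical in
/-- Vertex set of the subtree `t[v]` rooted at `v`. -/
noncomputable def desc (t : FTree) (v : ℕ) : Finset ℕ :=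
  t.supp.filter (fun w => t.IsDesc v w)

/-- Height of the subtree `t[v]` rooted at `v`. -/
noncomputable def heightAt (t : FTree) (v : ℕ) : ℕ :=
  (t.desc v).sup (fun w => t.depth w) - t.depth v

/-- Height of the tree. -/
noncomputable def height (t : FTree) : ℕ := t.heightAt t.root

/-- The set of children of `v` in `t`. -/
def children (t : FTree) (v : ℕ) : Finset ℕ :=
  t.supp.filter (fun w => t.par w = v ∧ w ≠ t.root)

open Classical in
/-- `γ_h(v)`: number of children of `v` whose subtree has height `h`. -/
noncomputable def gam (t : FTree) (v h : ℕ) : ℕ :=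
  ((t.children v).filter (fun c => t.heightAt c = h)).card

/-- The subtree of `t` rooted at `v` is isomorphic (as an unordered rooted tree)
to the subtree of `s` rooted at `w`: a bijection between the vertex sets sending
root to root and commuting with the parent maps (i.e. mapping edges to edges). -/
def SubtreeIso (t : FTree) (v : ℕ) (s : FTree) (w : ℕ) : Prop :=
  ∃ φ : ℕ → ℕ, Set.BijOn φ (t.desc v : Set ℕ) (s.desc w : Set ℕ) ∧ φ v = w ∧
    ∀ x ∈ t.desc v, x ≠ v → φ (t.par x) = s.par (φ x)

/-- Isomorphism of rooted trees. -/
def TreeIso (t s : FTree) : Prop := SubtreeIso t t.root s s.root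

/-- A tree is self-nested if any two of its subtrees of the same height
are isomorphic. -/
def SelfNested (t : FTree) : Prop :=
  ∀ v ∈ t.supp, ∀ w ∈ t.supp, t.heightAt v = t.heightAt w → SubtreeIso t v t w

open Classical in
/-- Height profile entry `ρ_t(h1,h2)`: the multiset (family up to permutation) of
the values `γ_{h2}(v)` over all vertices `v` of `t` with `H(t[v]) = h1`. -/
noncomputable def profile (t : FTree) (h1 h2 : ℕ) : Multiset ℕ :=
  (t.supp.filter (fun v => t.heightAt v = h1)).val.map (fun v => t.gam v h2)

/-- Number of vertices of `t`. -/
def numV (t : FTree) : ℕ := t.supp.card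

/-- `a` is a (weak) ancestor of `b`. -/
def IsAnc (t : FTree) (a b : ℕ) : Prop := ∃ n, t.par^[n] b = a

/-- `a` is a proper ancestor of `b`. -/
def ProperAnc (t : FTree) (a b : ℕ) : Prop := a ≠ b ∧ t.IsAnc a b

/-- `l` is the least common ancestor of `a` and `b`. -/
def IsLCA (t : FTree) (a b l : ℕ) : Prop :=
  l ∈ t.supp ∧ t.IsAnc l a ∧ t.IsAnc l b ∧
    ∀ m ∈ t.supp, t.IsAnc m a → t.IsAnc m b → t.IsAnc m l

/-- `φ`, restricted to the domain `D ⊆ t.supp`, is a constrained mapping in the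
sense of Zhang from `t` to `s`: a one-to-one correspondence preserving the
ancestor order, satisfying moreover Zhang's condition on least common ancestors. -/
def ZhangMapping (t s : FTree) (D : Finset ℕ) (φ : ℕ → ℕ) : Prop :=
  D ⊆ t.supp ∧ (∀ x ∈ D, φ x ∈ s.supp) ∧ Set.InjOn φ (D : Set ℕ) ∧
  (∀ a ∈ D, ∀ b ∈ D, (t.ProperAnc a b ↔ s.ProperAnc (φ a) (φ b))) ∧
  (∀ v1 ∈ D, ∀ v2 ∈ D, ∀ v3 ∈ D, ∀ l l',
    t.IsLCA v1 v2 l → s.IsLCA (φ v1) (φ v2) l' →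
    (t.ProperAnc l v3 ↔ s.ProperAnc l' (φ v3)))

/-- Allowed inserting operation (AI): adding a new internal vertex `w` as a child of
`v`, making `w` the parent of the child `c` of `v`; allowed only if
`H(t[c]) + 1 < H(t[v])`. -/
def InsertAI (t θ : FTree) : Prop :=
  ∃ v c w, v ∈ t.supp ∧ c ∈ t.children v ∧ w ∉ t.supp ∧
    t.heightAt c + 1 < t.heightAt v ∧
    θ.supp = insert w t.supp ∧ θ.root = t.root ∧
    θ.par w = v ∧ θ.par c = w ∧ ∀ x ∈ t.supp, x ≠ c → θ.par x = t.par x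

/-- Allowed inserting operation (AS): attaching a tree `s` as a new child subtree of
`v`; allowed only if `H(s) + 1 ≤ H(t[v])`. -/
def InsertAS (t θ : FTree) : Prop :=
  ∃ (v : ℕ) (s : FTree), v ∈ t.supp ∧ Disjoint s.supp t.supp ∧
    s.height + 1 ≤ t.heightAt v ∧
    θ.supp = t.supp ∪ s.supp ∧ θ.root = t.root ∧ θ.par s.root = v ∧
    (∀ x ∈ t.supp, θ.par x = t.par x) ∧ (∀ x ∈ s.supp, x ≠ s.root → θ.par x = s.par x)

/-- One allowed inserting operation. -/
def InsertStep (t θ : FTree) : Prop := InsertAI t θ ∨ InsertAS t θ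

/-- Allowed deleting operation (DI): deleting an internal vertex `v`, child of `u`,
having a unique child `c` (which becomes a child of `u`); allowed only if `u` has
another child `v'` with `H(t[v']) ≥ H(t[v])`. -/
def DeleteDI (t θ : FTree) : Prop :=
  ∃ u v c, v ∈ t.children u ∧ t.children v = {c} ∧
    (∃ v' ∈ t.children u, v' ≠ v ∧ t.heightAt v ≤ t.heightAt v') ∧
    θ.supp = t.supp.erase v ∧ θ.root = t.root ∧ θ.par c = u ∧
    ∀ x ∈ t.supp, x ≠ v → x ≠ c → θ.par x = t.par x

/-- Allowed deleting operation (DS): deleting the whole subtree rooted at a child `w`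
of `v`; allowed only if `v` has another child `w'` with `H(t[w']) + 1 = H(t[v])`. -/
def DeleteDS (t θ : FTree) : Prop :=
  ∃ v w, w ∈ t.children v ∧
    (∃ w' ∈ t.children v, w' ≠ w ∧ t.heightAt w' + 1 = t.heightAt v) ∧
    θ.supp = t.supp \ t.desc w ∧ θ.root = t.root ∧
    ∀ x ∈ θ.supp, θ.par x = t.par x

/-- One allowed deleting operation. -/
def DeleteStep (t θ : FTree) : Prop := DeleteDI t θ ∨ DeleteDS t θ

/-- A general single-vertex inserting operation: a new vertex `w` is added as a child
of `v`, and the vertices of a subset `C` of the children of `v` become children of `w`. -/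
def GeneralInsert (t θ : FTree) : Prop :=
  ∃ (v w : ℕ) (C : Finset ℕ), v ∈ t.supp ∧ w ∉ t.supp ∧ C ⊆ t.children v ∧
    θ.supp = insert w t.supp ∧ θ.root = t.root ∧ θ.par w = v ∧
    (∀ x ∈ C, θ.par x = w) ∧ ∀ x ∈ t.supp, x ∉ C → θ.par x = t.par x

/-- Cost of a constrained mapping with domain `D`: vertices of `t` not in the domain
are deleted, vertices of `s` not in the image are inserted (unit costs). -/
def mappingCost (t s : FTree) (D : Finset ℕ) (φ : ℕ → ℕ) : ℕ :=
  (t.numV - D.card) + (s.numV - (D.image φ).card)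

/-- Zhang's constrained edit distance between unordered trees: the minimal cost
associated with a constrained mapping between `t` and `s`. -/
noncomputable def DZ (t s : FTree) : ℕ :=
  sInf { c | ∃ (D : Finset ℕ) (φ : ℕ → ℕ), ZhangMapping t s D φ ∧ c = mappingCost t s D φ }

end FTree

/-!
Edges of the DAG reduction go from a class of subtrees of height `h` to classes of height at most
`h - 1`, so a path through all classes visits them in strictly decreasing height. Hence if such a
path exists, two subtrees of the same height lie in the same class, i.e. the tree is self-nested.
Conversely, the heights of the subtrees of a self-nested tree `t` are exactly `0, …, H(t)`, and
the classes are the heights: following from the root a child of maximal height at every step gives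
vertices of heights `H(t), H(t) - 1, …, 0`, a path through all the classes.
-/

namespace FTree

variable (t : FTree)

lemma iterate_par_mem {v : ℕ} (hv : v ∈ t.supp) (n : ℕ) : t.par^[n] v ∈ t.supp := by
  induction n with
  | zero => exact hv
  | succ n ih => rw [Function.iterate_succ_apply']; exact t.par_mem _ ih

lemma iterate_depth_eq_root {v : ℕ} (hv : v ∈ t.supp) : t.par^[t.depth v] v = t.root := by
  rw [depth, dif_pos hv]; exact Nat.find_spec (t.reach v hv)

lemma depth_le_of_iterate_eq_root {v n : ℕ} (hv : v ∈ t.supp) (h : t.par^[n] v = t.root) :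
    t.depth v ≤ n := by
  rw [depth, dif_pos hv]; exact Nat.find_le h

lemma depth_root : t.depth t.root = 0 :=
  Nat.le_zero.1 (t.depth_le_of_iterate_eq_root t.root_mem rfl)

lemma depth_iterate_par_add {w n : ℕ} (hw : w ∈ t.supp) (hn : n ≤ t.depth w) :
    t.depth (t.par^[n] w) + n = t.depth w := by
  have hu := t.iterate_par_mem hw n
  have h₁ : t.depth w ≤ t.depth (t.par^[n] w) + n := by
    apply t.depth_le_of_iterate_eq_root hw
    rw [Function.iterate_add_apply, t.iterate_depth_eq_root hu]
  have h₂ : t.depth (t.par^[n] w) ≤ t.depth w - n := by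
    apply t.depth_le_of_iterate_eq_root hu
    rw [← Function.iterate_add_apply, Nat.sub_add_cancel hn, t.iterate_depth_eq_root hw]
  omega

lemma mem_desc_iff {v w : ℕ} : w ∈ t.desc v ↔
    w ∈ t.supp ∧ t.depth v ≤ t.depth w ∧ t.par^[t.depth w - t.depth v] w = v := by
  classical
  unfold desc
  rw [Finset.mem_filter]
  simp only [IsDesc]
  constructor
  · rintro ⟨hw, -, n, hn, rfl⟩
    have := t.depth_iterate_par_add hw hn
    exact ⟨hw, by omega, by rw [show t.depth w - t.depth (t.par^[n] w) = n by omega]⟩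
  · rintro ⟨hw, -, h⟩
    exact ⟨hw, hw, _, Nat.sub_le _ _, h⟩

variable {t}

lemma mem_supp_of_mem_desc {v w : ℕ} (h : w ∈ t.desc v) : w ∈ t.supp :=
  (t.mem_desc_iff.1 h).1

lemma mem_supp_of_desc_nonempty {v : ℕ} (h : (t.desc v).Nonempty) : v ∈ t.supp := by
  obtain ⟨w, hw⟩ := h
  obtain ⟨hw, -, hv⟩ := t.mem_desc_iff.1 hw
  exact hv ▸ t.iterate_par_mem hw _

lemma self_mem_desc {v : ℕ} (hv : v ∈ t.supp) : v ∈ t.desc v :=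
  t.mem_desc_iff.2 ⟨hv, le_rfl, by simp⟩

lemma mem_desc_root {v : ℕ} (hv : v ∈ t.supp) : v ∈ t.desc t.root :=
  t.mem_desc_iff.2
    ⟨hv, by simp [depth_root], by simpa [depth_root] using t.iterate_depth_eq_root hv⟩

lemma iterate_par_mem_desc {v w k : ℕ} (h : w ∈ t.desc v) (hk : k ≤ t.depth w - t.depth v) :
    t.par^[k] w ∈ t.desc v ∧ t.depth (t.par^[k] w) + k = t.depth w := by
  obtain ⟨hw, hle, hv⟩ := t.mem_desc_iff.1 h
  have hd := t.depth_iterate_par_add hw (n := k) (by omega)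
  refine ⟨t.mem_desc_iff.2 ⟨t.iterate_par_mem hw k, by omega, ?_⟩, hd⟩
  rw [← Function.iterate_add_apply, show t.depth (t.par^[k] w) - t.depth v + k =
    t.depth w - t.depth v by omega, hv]

lemma iterate_par_ne_of_lt {v w k : ℕ} (h : w ∈ t.desc v) (hk : k < t.depth w - t.depth v) :
    t.par^[k] w ≠ v := by
  intro he
  have := (t.iterate_par_mem_desc h hk.le).2
  rw [he] at this
  omega

lemma par_mem_desc {v w : ℕ} (h : w ∈ t.desc v) (hne : w ≠ v) : t.par w ∈ t.desc v := by
  refine (iterate_par_mem_desc (k := 1) h (Nat.one_le_iff_ne_zero.2 fun h0 => hne ?_)).1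
  simpa [h0] using (t.mem_desc_iff.1 h).2.2

lemma desc_subset {v w : ℕ} (h : w ∈ t.desc v) : t.desc w ⊆ t.desc v := by
  intro x hx
  obtain ⟨-, hle, hw⟩ := t.mem_desc_iff.1 h
  obtain ⟨hx, hxle, hxw⟩ := t.mem_desc_iff.1 hx
  refine t.mem_desc_iff.2 ⟨hx, by omega, ?_⟩
  rw [show t.depth x - t.depth v = (t.depth w - t.depth v) + (t.depth x - t.depth w) by omega,
    Function.iterate_add_apply, hxw, hw]

lemma mem_children_iff {v c : ℕ} :
    c ∈ t.children v ↔ c ∈ t.desc v ∧ t.depth c = t.depth v + 1 := by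
  simp only [children, Finset.mem_filter]
  constructor
  · rintro ⟨hc, rfl, hcr⟩
    have hpos : 1 ≤ t.depth c := by
      by_contra! h0
      exact hcr (by simpa [Nat.lt_one_iff.1 h0] using t.iterate_depth_eq_root hc)
    have := t.depth_iterate_par_add hc hpos
    simp only [Function.iterate_one] at this
    refine ⟨t.mem_desc_iff.2 ⟨hc, by omega, ?_⟩, by omega⟩
    simp [show t.depth c - t.depth (t.par c) = 1 by omega]
  · rintro ⟨hc, hd⟩
    obtain ⟨hc, -, hv⟩ := t.mem_desc_iff.1 hc
    refine ⟨hc, by simpa [hd] using hv, fun hcr => ?_⟩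
    rw [hcr, depth_root] at hd
    omega

lemma heightAt_eq_sup (v : ℕ) :
    t.heightAt v = (t.desc v).sup (fun w => t.depth w - t.depth v) := by
  rcases (t.desc v).eq_empty_or_nonempty with he | hne
  · simp [heightAt, he]
  · obtain ⟨w, hw, hsup⟩ := Finset.exists_mem_eq_sup _ hne t.depth
    apply le_antisymm
    · rw [heightAt, hsup]
      exact Finset.le_sup (f := fun w => t.depth w - t.depth v) hw
    · exact Finset.sup_le fun x hx => Nat.sub_le_sub_right (Finset.le_sup hx) _

lemma depth_sub_le_heightAt {v w : ℕ} (h : w ∈ t.desc v) :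
    t.depth w - t.depth v ≤ t.heightAt v := by
  rw [heightAt_eq_sup]
  exact Finset.le_sup (f := fun w => t.depth w - t.depth v) h

lemma exists_mem_desc_depth_eq {v : ℕ} (hv : v ∈ t.supp) :
    ∃ w ∈ t.desc v, t.depth w = t.depth v + t.heightAt v := by
  obtain ⟨w, hw, hsup⟩ :=
    Finset.exists_mem_eq_sup _ ⟨v, self_mem_desc hv⟩ (fun w => t.depth w - t.depth v)
  have := (t.mem_desc_iff.1 hw).2.1
  exact ⟨w, hw, by rw [heightAt_eq_sup, hsup]; omega⟩

lemma heightAt_add_one_le_of_mem_children {v c : ℕ} (h : c ∈ t.children v) :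
    t.heightAt c + 1 ≤ t.heightAt v := by
  obtain ⟨hcv, hd⟩ := mem_children_iff.1 h
  obtain ⟨w, hw, hwd⟩ := exists_mem_desc_depth_eq (mem_supp_of_mem_desc hcv)
  have := depth_sub_le_heightAt (desc_subset hcv hw)
  omega

lemma exists_mem_children_heightAt_add_one {v : ℕ} (hv : v ∈ t.supp) (h : 1 ≤ t.heightAt v) :
    ∃ c ∈ t.children v, t.heightAt c + 1 = t.heightAt v := by
  obtain ⟨w, hw, hwd⟩ := exists_mem_desc_depth_eq hv
  obtain ⟨hc, hcd⟩ := iterate_par_mem_desc hw (k := t.heightAt v - 1) (by omega)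
  set c := t.par^[t.heightAt v - 1] w
  have hcv : c ∈ t.children v := mem_children_iff.2 ⟨hc, by omega⟩
  have hwc : w ∈ t.desc c := t.mem_desc_iff.2 ⟨mem_supp_of_mem_desc hw, by omega,
    by rw [show t.depth w - t.depth c = t.heightAt v - 1 by omega]⟩
  have := depth_sub_le_heightAt hwc
  have := heightAt_add_one_le_of_mem_children hcv
  exact ⟨c, hcv, by omega⟩

lemma heightAt_le_height {v : ℕ} (hv : v ∈ t.supp) : t.heightAt v ≤ t.height := by
  obtain ⟨w, hw, hwd⟩ := exists_mem_desc_depth_eq hv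
  have := depth_sub_le_heightAt (mem_desc_root (mem_supp_of_mem_desc hw))
  rw [depth_root] at this
  unfold height
  omega

lemma subtreeIso_refl (v : ℕ) : SubtreeIso t v t v :=
  ⟨id, Set.bijOn_id _, rfl, fun _ _ _ => rfl⟩

lemma SubtreeIso.symm {v w : ℕ} (hv : v ∈ t.supp) (h : SubtreeIso t v t w) :
    SubtreeIso t w t v := by
  obtain ⟨φ, hbij, hroot, hcomm⟩ := h
  have hinv := hbij.invOn_invFunOn
  refine ⟨Function.invFunOn φ (t.desc v), hbij.symm hinv.symm, ?_, ?_⟩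
  · simpa [hroot] using hinv.1 (Finset.mem_coe.2 (self_mem_desc hv))
  · intro y hy hyw
    obtain ⟨x, hx, rfl⟩ := hbij.surjOn (Finset.mem_coe.2 hy)
    have hxv : x ≠ v := by rintro rfl; exact hyw hroot
    rw [← hcomm x hx hxv, hinv.1 (Finset.mem_coe.2 (par_mem_desc hx hxv)), hinv.1 hx]

lemma SubtreeIso.trans {u v w : ℕ} (h₁ : SubtreeIso t u t v) (h₂ : SubtreeIso t v t w) :
    SubtreeIso t u t w := by
  obtain ⟨φ, hb₁, hr₁, hc₁⟩ := h₁
  obtain ⟨ψ, hb₂, hr₂, hc₂⟩ := h₂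
  refine ⟨ψ ∘ φ, hb₂.comp hb₁, by simp [hr₁, hr₂], fun x hx hxu => ?_⟩
  have hfxv : φ x ≠ v := fun he => hxu <| hb₁.injOn (Finset.mem_coe.2 hx)
    (Finset.mem_coe.2 (self_mem_desc (mem_supp_of_desc_nonempty ⟨_, hx⟩))) (by rw [he, hr₁])
  simp only [Function.comp_apply]
  rw [hc₁ x hx hxu, hc₂ _ (hb₁.mapsTo hx) hfxv]

lemma SubtreeIso.heightAt_le {v w : ℕ} (h : SubtreeIso t v t w) :
    t.heightAt w ≤ t.heightAt v := by
  obtain ⟨φ, hbij, hroot, hcomm⟩ := h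
  have hiter : ∀ x ∈ t.desc v, ∀ k ≤ t.depth x - t.depth v,
      φ (t.par^[k] x) = t.par^[k] (φ x) := by
    intro x hx k hk
    induction k with
    | zero => rfl
    | succ k ih =>
      rw [Function.iterate_succ_apply', Function.iterate_succ_apply',
        hcomm _ (iterate_par_mem_desc hx (by omega)).1 (iterate_par_ne_of_lt hx (by omega)),
        ih (by omega)]
  rw [heightAt_eq_sup w]
  refine Finset.sup_le fun y hy => ?_
  obtain ⟨x, hx, rfl⟩ := hbij.surjOn (Finset.mem_coe.2 hy)
  have hxv := (t.mem_desc_iff.1 hx).2.2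
  have hfx : t.par^[t.depth x - t.depth v] (φ x) = w := by
    rw [← hiter x hx _ le_rfl, hxv, hroot]
  have hw : w ∈ t.supp := mem_supp_of_desc_nonempty ⟨_, hy⟩
  have := t.depth_le_of_iterate_eq_root (mem_supp_of_mem_desc hy)
    (n := t.depth w + (t.depth x - t.depth v))
    (by rw [Function.iterate_add_apply, hfx, t.iterate_depth_eq_root hw])
  have := depth_sub_le_heightAt hx
  omega

lemma SubtreeIso.heightAt_eq {v w : ℕ} (hv : v ∈ t.supp) (h : SubtreeIso t v t w) :
    t.heightAt v = t.heightAt w :=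
  le_antisymm (h.symm hv).heightAt_le h.heightAt_le

variable (t)

/-- The edge of the DAG reduction from the class of `t[a]` to the class of `t[b]`. -/
def DagEdge (a b : ℕ) : Prop :=
  ∃ v ∈ t.supp, SubtreeIso t v t a ∧ ∃ w ∈ t.children v, SubtreeIso t w t b

variable {t}

lemma DagEdge.heightAt_lt {a b : ℕ} (h : t.DagEdge a b) : t.heightAt b < t.heightAt a := by
  obtain ⟨v, hv, hva, w, hw, hwb⟩ := h
  rw [← hva.heightAt_eq hv, ← hwb.heightAt_eq (mem_supp_of_mem_desc (mem_children_iff.1 hw).1)]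
  exact heightAt_add_one_le_of_mem_children hw

lemma dagEdge_of_mem_children {a b : ℕ} (h : b ∈ t.children a) : t.DagEdge a b :=
  ⟨a, mem_supp_of_desc_nonempty ⟨_, (mem_children_iff.1 h).1⟩, subtreeIso_refl a,
    b, h, subtreeIso_refl b⟩

lemma nodup_map_heightAt_of_isChain_dagEdge {L : List ℕ} (h : L.IsChain t.DagEdge) :
    (L.map t.heightAt).Nodup := by
  have hlt : (L.map t.heightAt).IsChain (· > ·) :=
    (List.isChain_map _).2 (h.imp fun _ _ hab => hab.heightAt_lt)
  exact (List.isChain_iff_pairwise.1 hlt).imp ne_of_gt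

lemma exists_isChain_children_map_heightAt {v : ℕ} (hv : v ∈ t.supp) :
    ∃ L : List ℕ, L.head? = some v ∧ (∀ x ∈ L, x ∈ t.supp) ∧
      L.map t.heightAt = (List.range (t.heightAt v + 1)).reverse ∧
      L.IsChain (fun a b => b ∈ t.children a) := by
  induction hn : t.heightAt v generalizing v with
  | zero => exact ⟨[v], rfl, by simpa using hv, by simp [hn], List.isChain_singleton _⟩
  | succ n ih =>
    obtain ⟨c, hc, hch⟩ := exists_mem_children_heightAt_add_one hv (by omega)
    obtain ⟨L, hLh, hLm, hLmap, hLch⟩ :=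
      ih (mem_supp_of_mem_desc (mem_children_iff.1 hc).1) (by omega)
    refine ⟨v :: L, rfl, List.forall_mem_cons.2 ⟨hv, hLm⟩, ?_, ?_⟩
    · simp [hLmap, hn, List.range_succ]
    · exact List.isChain_cons.2 ⟨fun y hy => by
        obtain rfl : y = c := by simpa [hLh, eq_comm] using hy
        exact hc, hLch⟩

end FTree

/-- The list `L` enumerates the vertices of the DAG reduction, one root per isomorphism class of
subtrees, and `List.Chain'` says it is a directed path. -/
theorem selfNested_iff_linear_dag (t : FTree) :
    t.SelfNested ↔
      ∃ L : List ℕ, (∀ x ∈ L, x ∈ t.supp) ∧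
        L.Pairwise (fun a b => ¬ FTree.SubtreeIso t a t b) ∧
        (∀ v ∈ t.supp, ∃ x ∈ L, FTree.SubtreeIso t v t x) ∧
        L.Chain' (fun a b => ∃ v ∈ t.supp, FTree.SubtreeIso t v t a ∧
          ∃ w ∈ t.children v, FTree.SubtreeIso t w t b) := by
  constructor
  · intro hsn
    obtain ⟨L, -, hLm, hLmap, hLch⟩ := t.exists_isChain_children_map_heightAt t.root_mem
    have hnodup : (L.map t.heightAt).Nodup := hLmap ▸ List.nodup_reverse.2 List.nodup_range
    refine ⟨L, hLm, ?_, fun v hv => ?_, hLch.imp fun _ _ => FTree.dagEdge_of_mem_children⟩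
    · exact (List.pairwise_map.1 hnodup).imp_of_mem fun ha _ hne hiso =>
        hne (hiso.heightAt_eq (hLm _ ha))
    · have hmem : t.heightAt v ∈ L.map t.heightAt := by
        rw [hLmap, List.mem_reverse, List.mem_range, Nat.lt_succ_iff]
        exact FTree.heightAt_le_height hv
      obtain ⟨x, hxL, hxv⟩ := List.mem_map.1 hmem
      exact ⟨x, hxL, hsn v hv x (hLm x hxL) hxv.symm⟩
  · rintro ⟨L, -, -, hcov, hch⟩ v hv w hw hvw
    obtain ⟨x, hxL, hvx⟩ := hcov v hv
    obtain ⟨y, hyL, hwy⟩ := hcov w hw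
    obtain rfl : x = y := List.inj_on_of_nodup_map
      (FTree.nodup_map_heightAt_of_isChain_dagEdge hch) hxL hyL
      (by rw [← hvx.heightAt_eq hv, ← hwy.heightAt_eq hw, hvw])
    exact hvx.trans (hwy.symm hw)
end

section
/- Let τ be a finite unordered rooted tree, v a vertex of τ and c a child of v. Let θ be the tree obtained from τ by adding a new internal vertex w as a child of v and making w the parent of c. Then every vertex u of τ satisfies H(θ[u]) = H(τ[u]) if and only if H(τ[c]) + 1 < H(τ[v]). -/
namespace FTree

variable (t : FTree)

lemma iter_mem {x : ℕ} (hx : x ∈ t.supp) (n : ℕ) : t.par^[n] x ∈ t.supp := by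
  induction n with
  | zero => simpa
  | succ n ih => rw [Function.iterate_succ_apply']; exact t.par_mem _ ih

lemma depth_spec {x : ℕ} (hx : x ∈ t.supp) : t.par^[t.depth x] x = t.root := by
  rw [depth, dif_pos hx]; exact Nat.find_spec (t.reach x hx)

lemma depth_min {x : ℕ} (hx : x ∈ t.supp) {n : ℕ} (hn : n < t.depth x) :
    t.par^[n] x ≠ t.root := by
  rw [depth, dif_pos hx] at hn
  exact Nat.find_min (t.reach x hx) hn

lemma depth_le {x : ℕ} (hx : x ∈ t.supp) {n : ℕ} (h : t.par^[n] x = t.root) :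
    t.depth x ≤ n := by
  rw [depth, dif_pos hx]; exact Nat.find_le h

lemma depth_eq_iff {x : ℕ} (hx : x ∈ t.supp) {d : ℕ}
    (h1 : t.par^[d] x = t.root) (h2 : ∀ n < d, t.par^[n] x ≠ t.root) :
    t.depth x = d := by
  refine le_antisymm (t.depth_le hx h1) ?_
  by_contra h
  exact h2 _ (lt_of_not_ge h) (t.depth_spec hx)

lemma root_of_depth_eq_zero {x : ℕ} (hx : x ∈ t.supp) (h : t.depth x = 0) :
    x = t.root := by
  have := t.depth_spec hx; rw [h] at this; simpa using this

lemma depth_par {x : ℕ} (hx : x ∈ t.supp) (hx0 : 0 < t.depth x) :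
    t.depth (t.par x) + 1 = t.depth x := by
  have hpx : t.par x ∈ t.supp := t.par_mem x hx
  have h1 : t.depth (t.par x) ≤ t.depth x - 1 := by
    apply t.depth_le hpx
    have := t.depth_spec hx
    rwa [show t.depth x = (t.depth x - 1) + 1 by omega, Function.iterate_succ_apply] at this
  have h2 : t.depth x ≤ t.depth (t.par x) + 1 := by
    apply t.depth_le hx
    rw [Function.iterate_succ_apply]
    exact t.depth_spec hpx
  omega

lemma depth_iter {x : ℕ} (hx : x ∈ t.supp) {n : ℕ} (hn : n ≤ t.depth x) :
    t.depth (t.par^[n] x) + n = t.depth x := by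
  induction n with
  | zero => simp
  | succ n ih =>
    have h1 := ih (by omega)
    have hmem := t.iter_mem hx n
    have hpos : 0 < t.depth (t.par^[n] x) := by omega
    have := t.depth_par hmem hpos
    rw [Function.iterate_succ_apply']
    omega

lemma IsDesc.mem {u x : ℕ} (h : t.IsDesc u x) : u ∈ t.supp := by
  obtain ⟨hx, n, hn, he⟩ := h
  exact he ▸ t.iter_mem hx n

lemma isDesc_refl {x : ℕ} (hx : x ∈ t.supp) : t.IsDesc x x :=
  ⟨hx, 0, by omega, rfl⟩

lemma IsDesc.depth_add {u x : ℕ} (h : t.IsDesc u x) :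
    ∃ n, n ≤ t.depth x ∧ t.par^[n] x = u ∧ t.depth u + n = t.depth x := by
  obtain ⟨hx, n, hn, he⟩ := h
  exact ⟨n, hn, he, by have := t.depth_iter hx hn; rwa [he] at this⟩

lemma IsDesc.depth_le' {u x : ℕ} (h : t.IsDesc u x) : t.depth u ≤ t.depth x := by
  obtain ⟨n, _, _, h⟩ := h.depth_add; omega

lemma isDesc_trans {a b x : ℕ} (h1 : t.IsDesc a b) (h2 : t.IsDesc b x) :
    t.IsDesc a x := by
  obtain ⟨n, hn, he, hd⟩ := h1.depth_add
  obtain ⟨m, hm, he2, hd2⟩ := h2.depth_add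
  refine ⟨h2.1, n + m, by omega, ?_⟩
  rw [Function.iterate_add_apply, he2, he]

lemma isDesc_comparable {a b x : ℕ} (h1 : t.IsDesc a x) (h2 : t.IsDesc b x)
    (hle : t.depth b ≤ t.depth a) : t.IsDesc b a := by
  obtain ⟨n, hn, he, hd⟩ := h1.depth_add
  obtain ⟨m, hm, he2, hd2⟩ := h2.depth_add
  have hnm : n ≤ m := by omega
  refine ⟨h1.mem, m - n, by omega, ?_⟩
  rw [← he, ← Function.iterate_add_apply]
  rw [show m - n + n = m by omega, he2]

lemma mem_desc {u x : ℕ} : x ∈ t.desc u ↔ t.IsDesc u x := by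
  classical
  rw [desc]
  simp only [Finset.mem_filter]
  exact ⟨fun h => h.2, fun h => ⟨h.1, h⟩⟩

lemma desc_subset_s7 {a b : ℕ} (h : t.IsDesc a b) : t.desc b ⊆ t.desc a := by
  intro x hx
  rw [mem_desc] at *
  exact t.isDesc_trans h hx

lemma heightAt_eq (u : ℕ) : t.heightAt u = (t.desc u).sup t.depth - t.depth u := rfl

lemma depth_le_sup_desc {u : ℕ} (hu : u ∈ t.supp) :
    t.depth u ≤ (t.desc u).sup t.depth :=
  Finset.le_sup (t.mem_desc.2 (t.isDesc_refl hu))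

end FTree
/-- Let `θ` be obtained from `t` by adding a new internal vertex `w` as
a child of `v`, making `w` the parent of the child `c` of `v`. Then every vertex `u` of
`t` satisfies `H(θ[u]) = H(t[u])` if and only if `H(t[c]) + 1 < H(t[v])`. -/
theorem insert_internal_preserves_heights_iff (t θ : FTree) (v c w : ℕ)
    (hv : v ∈ t.supp) (hc : c ∈ t.children v) (hw : w ∉ t.supp)
    (hsupp : θ.supp = insert w t.supp) (hroot : θ.root = t.root)
    (hparw : θ.par w = v) (hparc : θ.par c = w)
    (hpar : ∀ x ∈ t.supp, x ≠ c → θ.par x = t.par x) :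
    (∀ u ∈ t.supp, θ.heightAt u = t.heightAt u) ↔
      t.heightAt c + 1 < t.heightAt v := by
  classical
  have hcmem := hc
  rw [FTree.children, Finset.mem_filter] at hcmem
  obtain ⟨hcs, hpc, hcr⟩ := hcmem
  have hwr : w ≠ t.root := fun h => hw (h ▸ t.root_mem)
  have hdcpos : 0 < t.depth c := by
    rcases Nat.eq_zero_or_pos (t.depth c) with h | h
    · exact absurd (t.root_of_depth_eq_zero hcs h) hcr
    · exact h
  have hdc : t.depth c = t.depth v + 1 := by
    have := t.depth_par hcs hdcpos
    rw [hpc] at this; omega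
  have hDv : ¬ t.IsDesc c v := fun h => by
    have := h.depth_le'
    omega
  have memθ : ∀ x ∈ t.supp, x ∈ θ.supp := fun x hx => by
    rw [hsupp]; exact Finset.mem_insert_of_mem hx
  have hwmem : w ∈ θ.supp := by rw [hsupp]; exact Finset.mem_insert_self _ _
  have pathA : ∀ x ∈ t.supp, ¬ t.IsDesc c x → ∀ n ≤ t.depth x,
      θ.par^[n] x = t.par^[n] x := by
    intro x hx hD n
    induction n with
    | zero => intro _; simp
    | succ n ih =>
      intro hn
      rw [Function.iterate_succ_apply', Function.iterate_succ_apply', ih (by omega)]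
      exact hpar _ (t.iter_mem hx n) (fun h => hD ⟨hx, n, by omega, h⟩)
  have depthA : ∀ x ∈ t.supp, ¬ t.IsDesc c x → θ.depth x = t.depth x := by
    intro x hx hD
    apply θ.depth_eq_iff (memθ x hx)
    · rw [pathA x hx hD _ le_rfl, hroot]; exact t.depth_spec hx
    · intro n hn; rw [pathA x hx hD n (le_of_lt hn), hroot]; exact t.depth_min hx hn
  have pathw : ∀ n ≤ t.depth v, θ.par^[n + 1] w = t.par^[n] v := by
    intro n hn
    rw [Function.iterate_succ_apply, hparw, pathA v hv hDv n hn]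
  have hθw : θ.depth w = t.depth v + 1 := by
    apply θ.depth_eq_iff hwmem
    · rw [pathw _ le_rfl, hroot]; exact t.depth_spec hv
    · intro n hn
      rcases n with _ | k
      · simp only [Function.iterate_zero_apply, hroot]; exact hwr
      · rw [pathw k (by omega), hroot]
        exact t.depth_min hv (by omega)
  have iterC : ∀ x ∈ t.supp, t.IsDesc c x → t.par^[t.depth x - t.depth c] x = c := by
    intro x hx hD
    obtain ⟨n, hn, he, hd⟩ := hD.depth_add
    rw [show t.depth x - t.depth c = n by omega]
    exact he
  have pathB : ∀ x ∈ t.supp, t.IsDesc c x →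
      ∀ n ≤ t.depth x - t.depth c, θ.par^[n] x = t.par^[n] x := by
    intro x hx hD n
    have hdcx : t.depth c ≤ t.depth x := hD.depth_le'
    induction n with
    | zero => intro _; simp
    | succ n ih =>
      intro hn
      rw [Function.iterate_succ_apply', Function.iterate_succ_apply', ih (by omega)]
      refine hpar _ (t.iter_mem hx n) (fun h => ?_)
      have := t.depth_iter hx (n := n) (by omega)
      rw [h] at this
      omega
  have pathB2 : ∀ x ∈ t.supp, t.IsDesc c x →
      θ.par^[(t.depth x - t.depth c) + 1] x = w := by
    intro x hx hD
    rw [Function.iterate_succ_apply', pathB x hx hD _ le_rfl, iterC x hx hD, hparc]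
  have pathB3 : ∀ x ∈ t.supp, t.IsDesc c x → ∀ k ≤ t.depth v,
      θ.par^[k + ((t.depth x - t.depth c) + 2)] x = t.par^[k] v := by
    intro x hx hD k hk
    rw [Function.iterate_add_apply]
    have h2 : θ.par^[(t.depth x - t.depth c) + 2] x = v := by
      rw [show (t.depth x - t.depth c) + 2 = ((t.depth x - t.depth c) + 1) + 1 from rfl,
        Function.iterate_succ_apply', pathB2 x hx hD, hparw]
    rw [h2, pathA v hv hDv k hk]
  have depthB : ∀ x ∈ t.supp, t.IsDesc c x → θ.depth x = t.depth x + 1 := by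
    intro x hx hD
    have hdcx : t.depth c ≤ t.depth x := hD.depth_le'
    apply θ.depth_eq_iff (memθ x hx)
    · have h3 := pathB3 x hx hD (t.depth v) le_rfl
      rw [show t.depth x + 1 = t.depth v + ((t.depth x - t.depth c) + 2) by omega, h3,
        hroot]
      exact t.depth_spec hv
    · intro n hn
      rcases le_or_gt n (t.depth x - t.depth c) with h | h
      · rw [pathB x hx hD n h, hroot]
        exact t.depth_min hx (by omega)
      · rcases Nat.lt_or_ge n ((t.depth x - t.depth c) + 2) with h2 | h2
        · rw [show n = (t.depth x - t.depth c) + 1 by omega, pathB2 x hx hD, hroot]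
          exact hwr
        · rw [show n = (n - ((t.depth x - t.depth c) + 2)) + ((t.depth x - t.depth c) + 2)
            by omega, pathB3 x hx hD _ (by omega), hroot]
          exact t.depth_min hv (by omega)
  have hIsD : ∀ u ∈ t.supp, ∀ x ∈ t.supp, (θ.IsDesc u x ↔ t.IsDesc u x) := by
    intro u hu x hx
    constructor
    · rintro ⟨-, n, hn, he⟩
      by_cases hD : t.IsDesc c x
      · have hdcx : t.depth c ≤ t.depth x := hD.depth_le'
        rw [depthB x hx hD] at hn
        rcases le_or_gt n (t.depth x - t.depth c) with h | h
        · rw [pathB x hx hD n h] at he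
          exact ⟨hx, n, by omega, he⟩
        · rcases Nat.lt_or_ge n ((t.depth x - t.depth c) + 2) with h2 | h2
          · rw [show n = (t.depth x - t.depth c) + 1 by omega, pathB2 x hx hD] at he
            exact absurd hu (he ▸ hw)
          · rw [show n = (n - ((t.depth x - t.depth c) + 2)) + ((t.depth x - t.depth c) + 2)
              by omega, pathB3 x hx hD _ (by omega)] at he
            have hv1 : t.par^[(t.depth x - t.depth c) + 1] x = v := by
              rw [Function.iterate_succ_apply', iterC x hx hD, hpc]
            have h4 : t.par^[(n - ((t.depth x - t.depth c) + 2))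
                + ((t.depth x - t.depth c) + 1)] x = u := by
              rw [Function.iterate_add_apply, hv1, he]
            exact ⟨hx, _, by omega, h4⟩
      · rw [depthA x hx hD] at hn
        rw [pathA x hx hD n hn] at he
        exact ⟨hx, n, hn, he⟩
    · rintro ⟨-, n, hn, he⟩
      by_cases hD : t.IsDesc c x
      · have hdcx : t.depth c ≤ t.depth x := hD.depth_le'
        rcases le_or_gt n (t.depth x - t.depth c) with h | h
        · exact ⟨memθ x hx, n, by rw [depthB x hx hD]; omega,
            by rw [pathB x hx hD n h]; exact he⟩
        · have hv1 : t.par^[(t.depth x - t.depth c) + 1] x = v := by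
            rw [Function.iterate_succ_apply', iterC x hx hD, hpc]
          have hk : n - ((t.depth x - t.depth c) + 1) ≤ t.depth v := by omega
          have he2 : t.par^[n - ((t.depth x - t.depth c) + 1)] v = u := by
            rw [← hv1, ← Function.iterate_add_apply,
              show n - ((t.depth x - t.depth c) + 1) + ((t.depth x - t.depth c) + 1) = n
                by omega]
            exact he
          refine ⟨memθ x hx,
            (n - ((t.depth x - t.depth c) + 1)) + ((t.depth x - t.depth c) + 2), ?_, ?_⟩
          · rw [depthB x hx hD]; omega
          · rw [pathB3 x hx hD _ hk]; exact he2
      · exact ⟨memθ x hx, n, by rw [depthA x hx hD]; exact hn,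
          by rw [pathA x hx hD n hn]; exact he⟩
  have hIsDuw : ∀ u ∈ t.supp, (θ.IsDesc u w ↔ t.IsDesc u v) := by
    intro u hu
    constructor
    · rintro ⟨-, n, hn, he⟩
      rw [hθw] at hn
      rcases n with _ | k
      · simp only [Function.iterate_zero_apply] at he
        exact absurd hu (he ▸ hw)
      · rw [pathw k (by omega)] at he
        exact ⟨hv, k, by omega, he⟩
    · rintro ⟨-, n, hn, he⟩
      exact ⟨hwmem, n + 1, by rw [hθw]; omega, by rw [pathw n hn]; exact he⟩
  have hdesc_of_not : ∀ u ∈ t.supp, ¬ t.IsDesc u v → θ.desc u = t.desc u := by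
    intro u hu hA
    ext x
    rw [θ.mem_desc, t.mem_desc]
    constructor
    · intro h
      have hxθ := h.1
      rw [hsupp, Finset.mem_insert] at hxθ
      rcases hxθ with rfl | hx
      · exact absurd ((hIsDuw u hu).1 h) hA
      · exact (hIsD u hu x hx).1 h
    · intro h
      exact (hIsD u hu x h.1).2 h
  have hdesc_of : ∀ u ∈ t.supp, t.IsDesc u v → θ.desc u = insert w (t.desc u) := by
    intro u hu hA
    ext x
    rw [θ.mem_desc, Finset.mem_insert, t.mem_desc]
    constructor
    · intro h
      have hxθ := h.1
      rw [hsupp, Finset.mem_insert] at hxθ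
      rcases hxθ with rfl | hx
      · exact Or.inl rfl
      · exact Or.inr ((hIsD u hu x hx).1 h)
    · rintro (rfl | h)
      · exact (hIsDuw u hu).2 hA
      · exact (hIsD u hu x h.1).2 h
  have hvc : t.IsDesc v c := ⟨hcs, 1, by omega, by simp [hpc]⟩
  have hSc_ge : t.depth c ≤ (t.desc c).sup t.depth := t.depth_le_sup_desc hcs
  have hScSv : (t.desc c).sup t.depth ≤ (t.desc v).sup t.depth :=
    Finset.sup_mono (t.desc_subset_s7 hvc)
  have hSv_ge : t.depth v ≤ (t.desc v).sup t.depth := t.depth_le_sup_desc hv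
  have hheight3 : ∀ u ∈ t.supp, t.IsDesc u v →
      θ.heightAt u = max ((t.desc u).sup t.depth) ((t.desc c).sup t.depth + 1)
        - t.depth u := by
    intro u hu hA
    have hDu : ¬ t.IsDesc c u := fun h => by
      have h1 := h.depth_le'
      have h2 := hA.depth_le'
      omega
    have hdu : θ.depth u = t.depth u := depthA u hu hDu
    have hdesc := hdesc_of u hu hA
    have hsup : (θ.desc u).sup θ.depth
        = max ((t.desc u).sup t.depth) ((t.desc c).sup t.depth + 1) := by
      apply le_antisymm
      · apply Finset.sup_le
        intro x hx
        rw [hdesc, Finset.mem_insert] at hx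
        rcases hx with rfl | hx
        · rw [hθw]
          exact le_trans (by omega) (le_max_right _ _)
        · have hxs : x ∈ t.supp := (t.mem_desc.1 hx).1
          by_cases hDx : t.IsDesc c x
          · rw [depthB x hxs hDx]
            have h5 : x ∈ t.desc c := t.mem_desc.2 hDx
            have h6 := Finset.le_sup (f := t.depth) h5
            exact le_trans (by omega) (le_max_right _ _)
          · rw [depthA x hxs hDx]
            exact le_trans (Finset.le_sup hx) (le_max_left _ _)
      · rw [max_le_iff]
        constructor
        · apply Finset.sup_le
          intro x hx
          have hxs : x ∈ t.supp := (t.mem_desc.1 hx).1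
          have hxθ : x ∈ θ.desc u := by rw [hdesc]; exact Finset.mem_insert_of_mem hx
          have h7 : t.depth x ≤ θ.depth x := by
            by_cases hDx : t.IsDesc c x
            · rw [depthB x hxs hDx]; omega
            · rw [depthA x hxs hDx]
          exact le_trans h7 (Finset.le_sup hxθ)
        · obtain ⟨x0, hx0, hx0e⟩ := Finset.exists_mem_eq_sup (t.desc c)
            ⟨c, t.mem_desc.2 (t.isDesc_refl hcs)⟩ t.depth
          have hDx0 : t.IsDesc c x0 := t.mem_desc.1 hx0
          have hx0s : x0 ∈ t.supp := hDx0.1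
          have hx0u : x0 ∈ θ.desc u := by
            rw [hdesc]
            exact Finset.mem_insert_of_mem (t.mem_desc.2
              (t.isDesc_trans (t.isDesc_trans hA hvc) hDx0))
          have h8 := Finset.le_sup (f := θ.depth) hx0u
          rw [depthB x0 hx0s hDx0] at h8
          omega
    rw [θ.heightAt_eq, hsup, hdu]
  have hheight1 : ∀ u ∈ t.supp, t.IsDesc c u → θ.heightAt u = t.heightAt u := by
    intro u hu hD
    have hnA : ¬ t.IsDesc u v := fun h => by
      have h1 := h.depth_le'
      have h2 := hD.depth_le'
      omega
    have hdesc := hdesc_of_not u hu hnA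
    have hsup : (θ.desc u).sup θ.depth = (t.desc u).sup t.depth + 1 := by
      apply le_antisymm
      · apply Finset.sup_le
        intro x hx
        rw [hdesc] at hx
        have hxs : x ∈ t.supp := (t.mem_desc.1 hx).1
        have hDx : t.IsDesc c x := t.isDesc_trans hD (t.mem_desc.1 hx)
        rw [depthB x hxs hDx]
        have h9 := Finset.le_sup (f := t.depth) hx
        omega
      · obtain ⟨x0, hx0, hx0e⟩ := Finset.exists_mem_eq_sup (t.desc u)
          ⟨u, t.mem_desc.2 (t.isDesc_refl hu)⟩ t.depth
        have hx0s : x0 ∈ t.supp := (t.mem_desc.1 hx0).1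
        have hDx0 : t.IsDesc c x0 := t.isDesc_trans hD (t.mem_desc.1 hx0)
        have hx0θ : x0 ∈ θ.desc u := by rw [hdesc]; exact hx0
        have h10 := Finset.le_sup (f := θ.depth) hx0θ
        rw [depthB x0 hx0s hDx0] at h10
        omega
    rw [θ.heightAt_eq, t.heightAt_eq, hsup, depthB u hu hD]
    omega
  have hheight2 : ∀ u ∈ t.supp, ¬ t.IsDesc c u → ¬ t.IsDesc u v →
      θ.heightAt u = t.heightAt u := by
    intro u hu hD hA
    have hdesc := hdesc_of_not u hu hA
    have hsup : (θ.desc u).sup θ.depth = (t.desc u).sup t.depth := by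
      apply Finset.sup_congr hdesc
      intro x hx
      have hxs : x ∈ t.supp := (t.mem_desc.1 hx).1
      have hux : t.IsDesc u x := t.mem_desc.1 hx
      have hDx : ¬ t.IsDesc c x := by
        intro hcx
        rcases le_or_gt (t.depth c) (t.depth u) with hle | hlt
        · exact hD (t.isDesc_comparable hux hcx hle)
        · have huc : t.IsDesc u c := t.isDesc_comparable hcx hux (by omega)
          obtain ⟨n, hn, he, hda⟩ := huc.depth_add
          have hn1 : 1 ≤ n := by
            rcases Nat.eq_zero_or_pos n with rfl | h
            · simp only [Function.iterate_zero_apply] at he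
              exact absurd (by rw [← he]; exact t.isDesc_refl hcs) hD
            · exact h
          apply hA
          refine ⟨hv, n - 1, by omega, ?_⟩
          rw [← hpc, ← Function.iterate_succ_apply, Nat.succ_eq_add_one,
            show (n-1)+1 = n by omega]
          exact he
      exact depthA x hxs hDx
    rw [θ.heightAt_eq, t.heightAt_eq, hsup, depthA u hu hD]
  have hc_height : t.heightAt c = (t.desc c).sup t.depth - t.depth c := rfl
  have hv_height : t.heightAt v = (t.desc v).sup t.depth - t.depth v := rfl
  constructor
  · intro hall
    have h1 := hall v hv
    rw [hheight3 v hv (t.isDesc_refl hv), hv_height] at h1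
    rw [hc_height, hv_height]
    rcases le_or_gt ((t.desc v).sup t.depth) ((t.desc c).sup t.depth) with h | h
    · exfalso
      have hSeq : (t.desc c).sup t.depth = (t.desc v).sup t.depth :=
        le_antisymm hScSv h
      rw [max_eq_right (by omega)] at h1
      omega
    · omega
  · intro hlt u hu
    rw [hc_height, hv_height] at hlt
    by_cases hD : t.IsDesc c u
    · exact hheight1 u hu hD
    · by_cases hA : t.IsDesc u v
      · rw [hheight3 u hu hA, t.heightAt_eq]
        have hsub : t.desc v ⊆ t.desc u := t.desc_subset_s7 hA
        have hle : (t.desc v).sup t.depth ≤ (t.desc u).sup t.depth :=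
          Finset.sup_mono hsub
        rw [max_eq_left (by omega)]
      · exact hheight2 u hu hD hA
end
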